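/- arXiv:2303.04198 — 2 statements merged into one kernel-verified Lean document; each statement's English description precedes it below -/
import Mathlib

section
/- If a binary-classification distribution D on ℝ^d × {±1} is G-invariant and linearly separable (there exists β₀ with y⟨x, β₀⟩ ≥ 1 almost surely), then it is linearly separable by a G-invariant classifier: there exists β ∈ ℝ^d_G with y⟨x, β⟩ ≥ 1 with probability 1 under D. -/
open Matrix MeasureTheory

/-- If a G-invariant distribution on ℝ^d × {±1} is linearly separable, then it is
linearly separable by a G-invariant classifier. -/
theorem invariant_separable_by_invariant_classifier {G : Type*} [Group G] [Fintype G] {d : ℕ}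
    (ρ : G →* Matrix.GeneralLinearGroup (Fin d) ℝ)
    (D : Measure ((Fin d → ℝ) × ℝ)) [IsProbabilityMeasure D]
    (hlabel : D {p | p.2 = 1 ∨ p.2 = -1} = 1)
    (hGinv : ∀ g : G,
      Measure.map (fun p : (Fin d → ℝ) × ℝ =>
        ((ρ g : Matrix (Fin d) (Fin d) ℝ) *ᵥ p.1, p.2)) D = D)
    (hsep : ∃ β₀ : Fin d → ℝ, D {p | 1 ≤ p.2 * (p.1 ⬝ᵥ β₀)} = 1) :
    ∃ β : Fin d → ℝ,
      (∀ (x : Fin d → ℝ) (g : G),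
        β ⬝ᵥ x = β ⬝ᵥ ((ρ g : Matrix (Fin d) (Fin d) ℝ) *ᵥ x)) ∧
      D {p | 1 ≤ p.2 * (p.1 ⬝ᵥ β)} = 1 := by
  classical
  obtain ⟨β₀, hβ₀⟩ := hsep
  set n : ℝ := (Fintype.card G : ℝ) with hn
  have hnpos : (0:ℝ) < n := by
    rw [hn]; exact_mod_cast Fintype.card_pos
  set β : Fin d → ℝ :=
    n⁻¹ • ∑ g : G, ((ρ g : Matrix (Fin d) (Fin d) ℝ)ᵀ *ᵥ β₀) with hβ
  have haux : ∀ x : Fin d → ℝ,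
      x ⬝ᵥ β = n⁻¹ * ∑ g : G, (((ρ g : Matrix (Fin d) (Fin d) ℝ) *ᵥ x) ⬝ᵥ β₀) := by
    intro x
    have hsum : ∀ w : G → (Fin d → ℝ), x ⬝ᵥ (∑ g : G, w g) = ∑ g : G, x ⬝ᵥ w g := by
      intro w
      simp only [dotProduct, Finset.sum_apply, Finset.mul_sum]
      exact Finset.sum_comm
    rw [hβ, dotProduct_smul, hsum, smul_eq_mul]
    congr 1
    refine Finset.sum_congr rfl fun g _ => ?_
    rw [Matrix.mulVec_transpose, dotProduct_comm _ β₀, Matrix.dotProduct_mulVec]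
    exact (dotProduct_comm _ _)
  -- invariance
  have hinv : ∀ (x : Fin d → ℝ) (g : G),
      β ⬝ᵥ x = β ⬝ᵥ ((ρ g : Matrix (Fin d) (Fin d) ℝ) *ᵥ x) := by
    intro x h
    rw [dotProduct_comm, dotProduct_comm β, haux, haux]
    congr 1
    have key : ∀ g : G,
        ((ρ g : Matrix (Fin d) (Fin d) ℝ) *ᵥ ((ρ h : Matrix (Fin d) (Fin d) ℝ) *ᵥ x)) ⬝ᵥ β₀
          = ((ρ (g * h) : Matrix (Fin d) (Fin d) ℝ) *ᵥ x) ⬝ᵥ β₀ := by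
      intro g
      rw [Matrix.mulVec_mulVec]
      congr 2
      rw [_root_.map_mul, Units.val_mul]
    rw [Finset.sum_congr rfl fun g _ => key g]
    exact (Equiv.sum_comp (Equiv.mulRight h)
      (fun g : G => ((ρ g : Matrix (Fin d) (Fin d) ℝ) *ᵥ x) ⬝ᵥ β₀)).symm
  refine ⟨β, hinv, ?_⟩
  -- measurability of the classification sets
  have hmeas : ∀ v : Fin d → ℝ, MeasurableSet {p : (Fin d → ℝ) × ℝ | 1 ≤ p.2 * (p.1 ⬝ᵥ v)} := by
    intro v
    have hcont : Continuous fun p : (Fin d → ℝ) × ℝ => p.2 * (p.1 ⬝ᵥ v) := by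
      apply Continuous.mul continuous_snd
      exact (continuous_finset_sum _ fun i _ =>
        ((continuous_apply i).comp continuous_fst).mul continuous_const)
    exact measurableSet_le measurable_const hcont.measurable
  -- each shifted set has full measure
  have hfull : ∀ g : G,
      D {p : (Fin d → ℝ) × ℝ | 1 ≤ p.2 * (((ρ g : Matrix (Fin d) (Fin d) ℝ) *ᵥ p.1) ⬝ᵥ β₀)}
        = 1 := by
    intro g
    have hmeasmap : Measurable fun p : (Fin d → ℝ) × ℝ =>
        ((ρ g : Matrix (Fin d) (Fin d) ℝ) *ᵥ p.1, p.2) := by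
      refine Measurable.prod ?_ measurable_snd
      refine measurable_pi_lambda _ fun i => ?_
      simp only [Matrix.mulVec, dotProduct]
      fun_prop
    have := hGinv g
    calc D {p : (Fin d → ℝ) × ℝ | 1 ≤ p.2 * (((ρ g : Matrix (Fin d) (Fin d) ℝ) *ᵥ p.1) ⬝ᵥ β₀)}
        = (Measure.map (fun p : (Fin d → ℝ) × ℝ =>
            ((ρ g : Matrix (Fin d) (Fin d) ℝ) *ᵥ p.1, p.2)) D)
            {p | 1 ≤ p.2 * (p.1 ⬝ᵥ β₀)} := by
          rw [Measure.map_apply hmeasmap (hmeas β₀)]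
          rfl
      _ = 1 := by rw [this]; exact hβ₀
  -- the intersection has full measure
  have hints : D (⋂ g : G, {p : (Fin d → ℝ) × ℝ |
      1 ≤ p.2 * (((ρ g : Matrix (Fin d) (Fin d) ℝ) *ᵥ p.1) ⬝ᵥ β₀)}) = 1 := by
    have hmg : ∀ g : G, MeasurableSet {p : (Fin d → ℝ) × ℝ |
        1 ≤ p.2 * (((ρ g : Matrix (Fin d) (Fin d) ℝ) *ᵥ p.1) ⬝ᵥ β₀)} := by
      intro g
      have hcont : Continuous fun p : (Fin d → ℝ) × ℝ =>
          p.2 * (((ρ g : Matrix (Fin d) (Fin d) ℝ) *ᵥ p.1) ⬝ᵥ β₀) := by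
        simp only [Matrix.mulVec, dotProduct]
        fun_prop
      exact measurableSet_le measurable_const hcont.measurable
    rw [← prob_compl_eq_zero_iff (MeasurableSet.iInter fun g => hmg g), Set.compl_iInter]
    refine measure_iUnion_null fun g => ?_
    rw [prob_compl_eq_zero_iff (hmg g)]
    exact hfull g
  -- inclusion into the target set
  have hsub : (⋂ g : G, {p : (Fin d → ℝ) × ℝ |
      1 ≤ p.2 * (((ρ g : Matrix (Fin d) (Fin d) ℝ) *ᵥ p.1) ⬝ᵥ β₀)})
      ⊆ {p : (Fin d → ℝ) × ℝ | 1 ≤ p.2 * (p.1 ⬝ᵥ β)} := by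
    intro p hp
    simp only [Set.mem_iInter, Set.mem_setOf_eq] at hp ⊢
    rw [haux p.1, ← mul_assoc, mul_comm p.2, mul_assoc, Finset.mul_sum]
    have hge : n ≤ ∑ g : G, p.2 * (((ρ g : Matrix (Fin d) (Fin d) ℝ) *ᵥ p.1) ⬝ᵥ β₀) := by
      calc n = ∑ _g : G, (1:ℝ) := by simp [hn]
        _ ≤ _ := Finset.sum_le_sum fun g _ => hp g
    calc (1:ℝ) = n⁻¹ * n := by field_simp
      _ ≤ _ := by
        apply mul_le_mul_of_nonneg_left hge
        positivity
  exact le_antisymm (measure_mono (Set.subset_univ _) |>.trans (by simp))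
    (hints ▸ measure_mono hsub)
end

section
/- For a function class H of linear maps x ↦ ⟨β, x⟩ with β ranging over G-invariant vectors of Euclidean norm at most B, the empirical Rademacher complexity over samples x_1, …, x_n is at most B · max_i ‖x̄_i‖ / √n, where x̄_i is the orbit average of x_i. -/
/-!
For a `G`-invariant `β` we have `β ⬝ᵥ xᵢ = β ⬝ᵥ x̄ᵢ`, so by Cauchy–Schwarz the supremum for a
sign pattern `σ` is at most `B ‖∑ σᵢ x̄ᵢ‖`. Averaged over `σ` the cross terms cancel, so the
average of `‖∑ σᵢ x̄ᵢ‖²` is `∑ ‖x̄ᵢ‖²`, and by Cauchy–Schwarz again the average of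
`‖∑ σᵢ x̄ᵢ‖` is at most `√(∑ ‖x̄ᵢ‖²) ≤ √n · maxᵢ ‖x̄ᵢ‖`.
-/

open Matrix
open scoped InnerProductSpace

theorem dotProduct_average_mulVec_eq_of_invariant {G m : Type*} [Fintype G] [Nonempty G]
    [Fintype m] (A : G → Matrix m m ℝ) {β : m → ℝ} (hβ : ∀ v g, β ⬝ᵥ v = β ⬝ᵥ (A g *ᵥ v))
    (v : m → ℝ) : β ⬝ᵥ ((Fintype.card G : ℝ)⁻¹ • ∑ g, A g *ᵥ v) = β ⬝ᵥ v := by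
  simp only [dotProduct_smul, dotProduct_sum, ← hβ, Finset.sum_const, Finset.card_univ,
    nsmul_eq_mul, smul_eq_mul]
  field_simp

namespace EuclideanSpace

theorem norm_toLp_eq_sqrt_dotProduct {m : Type*} [Fintype m] (v : m → ℝ) :
    ‖(WithLp.toLp 2 v : EuclideanSpace ℝ m)‖ = √(v ⬝ᵥ v) := by
  rw [norm_eq_sqrt_real_inner, inner_toLp_toLp, star_trivial]

theorem dotProduct_eq_inner_toLp {m : Type*} [Fintype m] (v w : m → ℝ) :
    v ⬝ᵥ w = ⟪(WithLp.toLp 2 v : EuclideanSpace ℝ m), WithLp.toLp 2 w⟫_ℝ := by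
  rw [inner_toLp_toLp, star_trivial, dotProduct_comm]

end EuclideanSpace

theorem Real.sqrt_sum_sq_le_sqrt_card_mul_iSup {ι : Type*} [Fintype ι] {f : ι → ℝ}
    (hf : ∀ i, 0 ≤ f i) : √(∑ i, f i ^ 2) ≤ √(Fintype.card ι) * ⨆ i, f i := by
  have hsum : ∑ i, f i ^ 2 ≤ Fintype.card ι * (⨆ i, f i) ^ 2 := by
    calc ∑ i, f i ^ 2 ≤ ∑ _i : ι, (⨆ i, f i) ^ 2 := Finset.sum_le_sum fun i _ =>
          pow_le_pow_left₀ (hf i) (le_ciSup (Set.finite_range f).bddAbove i) 2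
      _ = _ := by simp
  calc √(∑ i, f i ^ 2) ≤ √(Fintype.card ι * (⨆ i, f i) ^ 2) := Real.sqrt_le_sqrt hsum
    _ = _ := by rw [Real.sqrt_mul (Nat.cast_nonneg _), Real.sqrt_sq (Real.iSup_nonneg hf)]

section SignedSums

variable {E : Type*} [NormedAddCommGroup E] [InnerProductSpace ℝ E] {sgn : Bool → ℝ}

/-- Splitting off the first sign, each induction step is the parallelogram law. -/
theorem sum_norm_sq_signed_sum (hsgn : sgn true = 1 ∧ sgn false = -1) :
    ∀ {n : ℕ} (y : Fin n → E),
      ∑ σ : Fin n → Bool, ‖∑ i, sgn (σ i) • y i‖ ^ 2 = 2 ^ n * ∑ i, ‖y i‖ ^ 2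
  | 0, y => by simp
  | n + 1, y => by
    rw [← (Fin.consEquiv fun _ => Bool).sum_comp, Fintype.sum_prod_type, Fintype.sum_bool]
    simp only [Fin.consEquiv_apply, Fin.sum_univ_succ, Fin.cons_zero, Fin.cons_succ, hsgn.1,
      hsgn.2, one_smul, neg_smul, ← Finset.sum_add_distrib, neg_add_eq_sub,
      norm_sub_rev (∑ i : Fin n, _), parallelogram_law_with_norm ℝ]
    rw [← Finset.mul_sum, Finset.sum_add_distrib,
      sum_norm_sq_signed_sum hsgn (fun i => y i.succ), Finset.sum_const, Finset.card_univ,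
      Fintype.card_fun, Fintype.card_bool, Fintype.card_fin, nsmul_eq_mul]
    push_cast
    ring

theorem sum_norm_signed_sum_le (hsgn : sgn true = 1 ∧ sgn false = -1) {n : ℕ} (y : Fin n → E) :
    ∑ σ : Fin n → Bool, ‖∑ i, sgn (σ i) • y i‖ ≤ 2 ^ n * √(∑ i, ‖y i‖ ^ 2) := by
  have hcs := sq_sum_le_card_mul_sum_sq (s := Finset.univ)
    (f := fun σ : Fin n → Bool => ‖∑ i, sgn (σ i) • y i‖)
  rw [sum_norm_sq_signed_sum hsgn, Finset.card_univ, Fintype.card_fun, Fintype.card_bool,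
    Fintype.card_fin, ← mul_assoc] at hcs
  push_cast [← sq] at hcs
  calc _ ≤ √((2 ^ n) ^ 2 * ∑ i, ‖y i‖ ^ 2) := (le_abs_self _).trans (Real.abs_le_sqrt hcs)
    _ = _ := by rw [Real.sqrt_mul (by positivity), Real.sqrt_sq (by positivity)]

end SignedSums

theorem rademacher_bound_invariant_linear_class_general {G : Type*} [Group G] [Fintype G]
    {d n : ℕ}
    (ρ : G →* Matrix.GeneralLinearGroup (Fin d) ℝ)
    (x : Fin n → Fin d → ℝ)
    (xbar : Fin n → Fin d → ℝ)
    (hxbar : ∀ i, xbar i = (Fintype.card G : ℝ)⁻¹ •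
      ∑ g : G, (ρ g : Matrix (Fin d) (Fin d) ℝ) *ᵥ x i)
    (B : ℝ) (hB : 0 ≤ B)
    (sgn : Bool → ℝ) (hsgn : sgn true = 1 ∧ sgn false = -1) :
    (n : ℝ)⁻¹ * ((2 ^ n : ℝ)⁻¹ *
        ∑ σ : Fin n → Bool,
          sSup {s : ℝ | ∃ β : Fin d → ℝ,
            (∀ (v : Fin d → ℝ) (g : G),
              β ⬝ᵥ v = β ⬝ᵥ ((ρ g : Matrix (Fin d) (Fin d) ℝ) *ᵥ v)) ∧
            Real.sqrt (β ⬝ᵥ β) ≤ B ∧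
            s = ∑ i : Fin n, sgn (σ i) * (β ⬝ᵥ x i)})
      ≤ B * (⨆ i : Fin n, Real.sqrt (xbar i ⬝ᵥ xbar i)) / Real.sqrt n := by
  set y : Fin n → EuclideanSpace ℝ (Fin d) := fun i => WithLp.toLp 2 (xbar i)
  have hy : ∀ i, ‖y i‖ = √(xbar i ⬝ᵥ xbar i) :=
    fun i => EuclideanSpace.norm_toLp_eq_sqrt_dotProduct _
  calc _ ≤ (n : ℝ)⁻¹ * ((2 ^ n : ℝ)⁻¹ * ∑ σ : Fin n → Bool, B * ‖∑ i, sgn (σ i) • y i‖) := by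
        gcongr with σ
        refine Real.sSup_le ?_ (by positivity)
        rintro _ ⟨β, hβ, hβB, rfl⟩
        have hβx : ∀ i, β ⬝ᵥ x i = β ⬝ᵥ xbar i := fun i => by
          rw [hxbar, dotProduct_average_mulVec_eq_of_invariant _ hβ]
        calc ∑ i, sgn (σ i) * (β ⬝ᵥ x i) = ⟪WithLp.toLp 2 β, ∑ i, sgn (σ i) • y i⟫_ℝ := by
              simp only [inner_sum, real_inner_smul_right, y, hβx,
                EuclideanSpace.dotProduct_eq_inner_toLp]
          _ ≤ ‖WithLp.toLp 2 β‖ * ‖∑ i, sgn (σ i) • y i‖ := real_inner_le_norm _ _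
          _ ≤ B * ‖∑ i, sgn (σ i) • y i‖ := by
              gcongr
              rwa [EuclideanSpace.norm_toLp_eq_sqrt_dotProduct]
    _ ≤ (n : ℝ)⁻¹ * (B * √(∑ i, ‖y i‖ ^ 2)) := by
        rw [← Finset.mul_sum, mul_left_comm (2 ^ n : ℝ)⁻¹]
        gcongr
        rw [inv_mul_le_iff₀ (by positivity)]
        exact sum_norm_signed_sum_le hsgn y
    _ ≤ (n : ℝ)⁻¹ * (B * (√n * ⨆ i, ‖y i‖)) := by
        gcongr
        simpa using Real.sqrt_sum_sq_le_sqrt_card_mul_iSup fun i => norm_nonneg (y i)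
    _ = B * (⨆ i, ‖y i‖) * (√n / n) := by ring
    _ = _ := by simp only [Real.sqrt_div_self', hy]; ring

/-- The empirical Rademacher complexity of the class of G-invariant linear predictors of
norm at most B is bounded by B · max_i ‖x̄_i‖ / √n. Expectation over Rademacher signs is
written as the average over all sign patterns σ : Fin n → Bool. -/
theorem rademacher_bound_invariant_linear_class {G : Type*} [Group G] [Fintype G]
    {d n : ℕ} (hn : 0 < n)
    (ρ : G →* Matrix.GeneralLinearGroup (Fin d) ℝ)
    (x : Fin n → Fin d → ℝ)
    (xbar : Fin n → Fin d → ℝ)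
    (hxbar : ∀ i, xbar i = (Fintype.card G : ℝ)⁻¹ •
      ∑ g : G, (ρ g : Matrix (Fin d) (Fin d) ℝ) *ᵥ x i)
    (B : ℝ) (hB : 0 ≤ B)
    (sgn : Bool → ℝ) (hsgn : sgn true = 1 ∧ sgn false = -1) :
    (n : ℝ)⁻¹ * ((2 ^ n : ℝ)⁻¹ *
        ∑ σ : Fin n → Bool,
          sSup {s : ℝ | ∃ β : Fin d → ℝ,
            (∀ (v : Fin d → ℝ) (g : G),
              β ⬝ᵥ v = β ⬝ᵥ ((ρ g : Matrix (Fin d) (Fin d) ℝ) *ᵥ v)) ∧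
            Real.sqrt (β ⬝ᵥ β) ≤ B ∧
            s = ∑ i : Fin n, sgn (σ i) * (β ⬝ᵥ x i)})
      ≤ B * (⨆ i : Fin n, Real.sqrt (xbar i ⬝ᵥ xbar i)) / Real.sqrt n :=
  rademacher_bound_invariant_linear_class_general ρ x xbar hxbar B hB sgn hsgn
end
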